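/- arXiv:1811.06155 — 2 statements merged into one kernel-verified Lean document; each statement's English description precedes it below -/
import Mathlib

section
/- For every natural number N there exist an integer n ≥ N and a strongly connected oriented graph D on n vertices whose cop number satisfies c(D) ≥ √n / 5. -/
open Classical

universe u

namespace CopsRobbers

variable {V : Type u}

/-- `CatchIn A k t c r` holds when, in the cops-and-robbers game on the digraph
with arc relation `A`, with the `k` cops currently at positions `c`, the robber
currently at `r`, and the cops to move, the cops can guarantee that some cop
occupies the robber's vertex within `t` further rounds (in each round every cop
either stays or moves along an out-arc, then the robber either stays or moves
along an out-arc; capture may occur right after the cops' move or after the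
robber's move). -/
inductive CatchIn (A : V → V → Prop) (k : ℕ) : ℕ → (Fin k → V) → V → Prop
  | caught {t : ℕ} {c : Fin k → V} {r : V} (h : ∃ i, c i = r) : CatchIn A k t c r
  | stepCatch {t : ℕ} {c : Fin k → V} {r : V} (c' : Fin k → V)
      (hc : ∀ i, c' i = c i ∨ A (c i) (c' i)) (h : ∃ i, c' i = r) :
      CatchIn A k (t + 1) c r
  | step {t : ℕ} {c : Fin k → V} {r : V} (c' : Fin k → V)
      (hc : ∀ i, c' i = c i ∨ A (c i) (c' i))
      (h : ∀ r' : V, r' = r ∨ A r r' → CatchIn A k t c' r') :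
      CatchIn A k (t + 1) c r

/-- `k` cops can choose initial positions guaranteeing capture within `t` rounds,
no matter which starting vertex the robber then chooses. -/
def CopsWinIn (A : V → V → Prop) (k t : ℕ) : Prop :=
  ∃ c : Fin k → V, ∀ r : V, CatchIn A k t c r

/-- `k` cops have a winning strategy on the digraph with arc relation `A`. -/
def CopsWin (A : V → V → Prop) (k : ℕ) : Prop := ∃ t, CopsWinIn A k t

/-- The cop number of a digraph: the least `k` such that `k` cops have a winning
strategy. -/
noncomputable def copNumber (A : V → V → Prop) : ℕ := sInf {k | CopsWin A k}

/-- The capture time of a digraph: the least `t` such that `copNumber A` cops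
can guarantee capture within `t` rounds. -/
noncomputable def captureTime (A : V → V → Prop) : ℕ :=
  sInf {t | CopsWinIn A (copNumber A) t}

/-- `A` is an orientation of the simple graph `G`: each edge of `G` is given
exactly one direction, and there are no other arcs. -/
def IsOrientation (G : SimpleGraph V) (A : V → V → Prop) : Prop :=
  (∀ u v, G.Adj u v ↔ (A u v ∨ A v u)) ∧ ∀ u v, A u v → ¬ A v u

/-- An oriented graph: a digraph with no loops and no pair of opposite arcs. -/
def IsOriented (A : V → V → Prop) : Prop := ∀ u v, A u v → ¬ A v u

/-- A digraph is strongly connected if every vertex is reachable from every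
other by a directed path. -/
def StronglyConnected (A : V → V → Prop) : Prop :=
  ∀ u v : V, Relation.ReflTransGen A u v

/-!
Take the Cayley digraph of `ZMod (5 p²)`, `p ≥ 5` prime, whose arcs are `u → u + s` for the
nonzero elements `s` of the Erdős–Turán Sidon set `S = {2 p i + (i² mod p) : i < p}`. As `S` is a
Sidon set containing `0`, the digraph is oriented, and a cop who is not on the robber's vertex `r`
can reach in one move at most one of the `p` vertices `r + s` (`s ∈ S`) open to the robber. So
against `k < p` cops the robber starts outside the at most `k p < 5 p²` vertices within one cop
move, and keeps moving to such a vertex forever. Hence the cop number is at least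
`p ≥ √(5 p²) / 5`.
-/

section Cayley

open Finset

variable {G : Type*} [AddCommGroup G]

def cayleyArc (S : Finset G) (u v : G) : Prop := u ≠ v ∧ v - u ∈ S

def IsSidon (S : Finset G) : Prop :=
  ∀ a ∈ S, ∀ b ∈ S, ∀ c ∈ S, ∀ d ∈ S, a + b = c + d → a = c ∧ b = d ∨ a = d ∧ b = c

/-- No cop can reach `r` in one move (staying put included, once `0 ∈ S`). -/
def IsSafe {k : ℕ} (S : Finset G) (c : Fin k → G) (r : G) : Prop := ∀ m, r - c m ∉ S

variable {S : Finset G}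

lemma sub_mem_of_eq_or_cayleyArc (h0 : 0 ∈ S) {u v : G} (h : v = u ∨ cayleyArc S u v) :
    v - u ∈ S := by
  rcases h with rfl | ⟨-, h⟩
  · simpa using h0
  · exact h

lemma eq_or_cayleyArc_add {s : G} (hs : s ∈ S) (u : G) : u + s = u ∨ cayleyArc S u (u + s) := by
  by_cases h : u + s = u
  · exact .inl h
  · exact .inr ⟨Ne.symm h, by simpa using hs⟩

lemma IsSidon.eq_zero_of_add_eq_zero (hS : IsSidon S) (h0 : 0 ∈ S) {a b : G} (ha : a ∈ S)
    (hb : b ∈ S) (h : a + b = 0) : a = 0 := by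
  rcases hS a ha b hb 0 h0 0 h0 (by simpa using h) with ⟨h, -⟩ | ⟨h, -⟩ <;> exact h

lemma IsSidon.isOriented_cayleyArc (hS : IsSidon S) (h0 : 0 ∈ S) : IsOriented (cayleyArc S) := by
  rintro u v ⟨huv, hvu⟩ ⟨-, huv'⟩
  exact huv (sub_eq_zero.1 (hS.eq_zero_of_add_eq_zero h0 hvu huv' (by abel))).symm

/-- The differences `a - b` of distinct elements of a Sidon set are distinct and nonzero. -/
lemma IsSidon.card_mul_card_sub_one_lt [Fintype G] (hS : IsSidon S) :
    #S * (#S - 1) < Fintype.card G := by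
  classical
  have hmaps : ∀ x ∈ S.offDiag, x.1 - x.2 ∈ univ.erase (0 : G) := by
    rintro ⟨a, b⟩ hab
    obtain ⟨-, -, hab⟩ := mem_offDiag.1 hab
    simpa [sub_eq_zero] using hab
  have hinj : Set.InjOn (fun x : G × G => x.1 - x.2) S.offDiag := by
    rintro ⟨a, b⟩ hab ⟨c, d⟩ hcd (h : a - b = c - d)
    obtain ⟨ha, hb, hab⟩ := mem_offDiag.1 hab
    obtain ⟨hc, hd, -⟩ := mem_offDiag.1 hcd
    rcases hS a ha d hd c hc b hb (sub_eq_sub_iff_add_eq_add.1 h) with ⟨rfl, rfl⟩ | ⟨rfl, -⟩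
    · rfl
    · exact absurd rfl hab
  calc #S * (#S - 1) = #S.offDiag := by rw [offDiag_card, Nat.mul_sub_one]
    _ ≤ #(univ.erase (0 : G)) := card_le_card_of_injOn _ hmaps hinj
    _ < Fintype.card G := card_erase_lt_of_mem (mem_univ 0)

/-- A cop at `v ≠ r` can intercept at most one of the robber's moves `r → r + s`. -/
lemma IsSidon.card_filter_add_sub_mem_le_one (hS : IsSidon S) {r v : G} (hrv : r ≠ v) :
    #(S.filter fun s => r + s - v ∈ S) ≤ 1 := by
  refine card_le_one.2 fun s hs s' hs' => ?_
  obtain ⟨hs, ht⟩ := mem_filter.1 hs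
  obtain ⟨hs', ht'⟩ := mem_filter.1 hs'
  rcases hS s hs _ ht' s' hs' _ ht (by abel) with ⟨h, -⟩ | ⟨h, -⟩
  · exact h
  · refine (hrv (sub_eq_zero.1 ?_)).elim
    rw [show r - v = r + s - v - s by abel, ← h, sub_self]

lemma IsSidon.exists_isSafe_add (hS : IsSidon S) {k : ℕ} (hk : k < #S) {c : Fin k → G} {r : G}
    (hc : ∀ m, c m ≠ r) : ∃ s ∈ S, IsSafe S c (r + s) := by
  classical
  let threatened := univ.biUnion fun m => S.filter fun s => r + s - c m ∈ S
  have hcard : #threatened < #S := calc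
    #threatened ≤ #(univ : Finset (Fin k)) * 1 :=
      card_biUnion_le_card_mul _ _ _ fun m _ => hS.card_filter_add_sub_mem_le_one (hc m).symm
    _ < #S := by simpa using hk
  obtain ⟨s, hs, hsT⟩ := exists_mem_notMem_of_card_lt_card hcard
  exact ⟨s, hs, fun m hm => hsT (mem_biUnion.2 ⟨m, mem_univ m, mem_filter.2 ⟨hs, hm⟩⟩)⟩

lemma exists_isSafe [Fintype G] {k : ℕ} (hk : k * #S < Fintype.card G) (c : Fin k → G) :
    ∃ r, IsSafe S c r := by
  classical
  let reach := univ.biUnion fun m => S.image (c m + ·)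
  have hcard : #reach < #(univ : Finset G) := calc
    #reach ≤ #(univ : Finset (Fin k)) * #S :=
      card_biUnion_le_card_mul _ _ _ fun m _ => card_image_le
    _ < #(univ : Finset G) := by simpa using hk
  obtain ⟨r, -, hr⟩ := exists_mem_notMem_of_card_lt_card hcard
  exact ⟨r, fun m hm => hr (mem_biUnion.2 ⟨m, mem_univ m, mem_image.2 ⟨_, hm, by abel⟩⟩)⟩

lemma IsSafe.ne {k : ℕ} {c c' : Fin k → G} {r : G} (hr : IsSafe S c r)
    (hc' : ∀ m, c' m - c m ∈ S) (m : Fin k) : c' m ≠ r := by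
  rintro rfl
  exact hr m (hc' m)

/-- Against fewer than `#S` cops the robber can always move to a safe vertex. -/
lemma IsSidon.not_catchIn (hS : IsSidon S) (h0 : 0 ∈ S) {k : ℕ} (hk : k < #S) {t : ℕ}
    {c : Fin k → G} {r : G} (h : CatchIn (cayleyArc S) k t c r) : ¬ IsSafe S c r := by
  induction h with
  | caught hcatch =>
    obtain ⟨m, hm⟩ := hcatch
    exact fun hr => hr.ne (fun _ => by simpa using h0) m hm
  | stepCatch c' hc hcatch =>
    obtain ⟨m, hm⟩ := hcatch
    exact fun hr => hr.ne (fun m => sub_mem_of_eq_or_cayleyArc h0 (hc m)) m hm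
  | step c' hc _ ih =>
    intro hr
    obtain ⟨s, hs, hsafe⟩ :=
      hS.exists_isSafe_add hk (hr.ne fun m => sub_mem_of_eq_or_cayleyArc h0 (hc m))
    exact ih _ (eq_or_cayleyArc_add hs _) hsafe

lemma copsWin_card {V : Type*} [Fintype V] (A : V → V → Prop) : CopsWin A (Fintype.card V) :=
  ⟨0, (Fintype.equivFin V).symm, fun r => .caught ⟨Fintype.equivFin V r, by simp⟩⟩

theorem IsSidon.card_le_copNumber [Fintype G] (hS : IsSidon S) (h0 : 0 ∈ S) :
    #S ≤ copNumber (cayleyArc S) := by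
  refine le_csInf ⟨_, copsWin_card _⟩ fun k ⟨t, c, hc⟩ => ?_
  by_contra! hk
  have hkS : k * #S < Fintype.card G := calc
    k * #S ≤ #S * (#S - 1) := by rw [mul_comm]; exact Nat.mul_le_mul_left _ (by omega)
    _ < Fintype.card G := hS.card_mul_card_sub_one_lt
  obtain ⟨r, hr⟩ := exists_isSafe hkS c
  exact hS.not_catchIn h0 hk (hc r) hr

theorem stronglyConnected_cayleyArc [Finite G] (hgen : AddSubgroup.closure (S : Set G) = ⊤) :
    StronglyConnected (cayleyArc S) := by
  have reach : ∀ x ∈ AddSubmonoid.closure (S : Set G), ∀ u,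
      Relation.ReflTransGen (cayleyArc S) u (u + x) := by
    intro x hx
    induction hx using AddSubmonoid.closure_induction with
    | mem s hs =>
      intro u
      rcases eq_or_cayleyArc_add hs u with h | h
      · rw [h]
      · exact .single h
    | zero => exact fun u => by rw [add_zero]
    | add x y _ _ hx hy =>
      intro u
      simpa [add_assoc] using (hx u).trans (hy (u + x))
  intro u v
  have hv : v - u ∈ AddSubmonoid.closure (S : Set G) := by
    rw [← AddSubgroup.closure_toAddSubmonoid_of_finite, hgen]
    trivial
  simpa using reach _ hv u

end Cayley

lemma eq_and_eq_or_of_add_eq_add_of_sq_add_sq {R : Type*} [CommRing R] [IsDomain R]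
    (h2 : (2 : R) ≠ 0) {a b c d : R} (hsum : a + b = c + d) (hsq : a ^ 2 + b ^ 2 = c ^ 2 + d ^ 2) :
    a = c ∧ b = d ∨ a = d ∧ b = c := by
  have hprod : a * b = c * d :=
    mul_left_cancel₀ h2 (by linear_combination (a + b + c + d) * hsum - hsq)
  -- `a` is a root of `(X - c) (X - d) = X ^ 2 - (a + b) X + a b`
  have hroot : (a - c) * (a - d) = 0 := by linear_combination a * hsum - hprod
  rcases mul_eq_zero.1 hroot with h | h
  · exact .inl ⟨sub_eq_zero.1 h, by linear_combination hsum - h⟩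
  · exact .inr ⟨sub_eq_zero.1 h, by linear_combination hsum - h⟩

lemma ZMod.natCast_eq_natCast_iff_of_lt {n a b : ℕ} (ha : a < n) (hb : b < n) :
    (a : ZMod n) = b ↔ a = b := by
  rw [ZMod.natCast_eq_natCast_iff', Nat.mod_eq_of_lt ha, Nat.mod_eq_of_lt hb]

section ErdosTuran

open Finset

variable {p : ℕ}

/-- The Erdős–Turán Sidon set is `{2 p i + (i² mod p) : i < p}`. -/
def erdosTuran (p i : ℕ) : ℕ := 2 * p * i + i ^ 2 % p

lemma erdosTuran_zero : erdosTuran p 0 = 0 := by simp [erdosTuran]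

lemma erdosTuran_lt (hp : 0 < p) {i : ℕ} (hi : i < p) : erdosTuran p i < 2 * p ^ 2 := by
  have := Nat.mod_lt (i ^ 2) hp
  unfold erdosTuran
  nlinarith

/-- Read in base `2p`, the sum `erdosTuran p i + erdosTuran p j` gives `i + j` and
`i² mod p + j² mod p`, which determine `{i, j}` over `ZMod p`. -/
lemma erdosTuran_add_eq_add (hp : p.Prime) (hp2 : p ≠ 2) {i j k l : ℕ} (hi : i < p) (hj : j < p)
    (hk : k < p) (hl : l < p)
    (h : erdosTuran p i + erdosTuran p j = erdosTuran p k + erdosTuran p l) :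
    i = k ∧ j = l ∨ i = l ∧ j = k := by
  have hp0 := hp.pos
  have decomp : ∀ x y : ℕ, (erdosTuran p x + erdosTuran p y) / (2 * p) = x + y ∧
      (erdosTuran p x + erdosTuran p y) % (2 * p) = x ^ 2 % p + y ^ 2 % p := fun x y =>
    (Nat.div_mod_unique (by omega)).2 ⟨by unfold erdosTuran; ring, by
      have := Nat.mod_lt (x ^ 2) hp0
      have := Nat.mod_lt (y ^ 2) hp0
      omega⟩
  have hsum : i + j = k + l := by rw [← (decomp i j).1, ← (decomp k l).1, h]
  have hsq : i ^ 2 % p + j ^ 2 % p = k ^ 2 % p + l ^ 2 % p := by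
    rw [← (decomp i j).2, ← (decomp k l).2, h]
  have : Fact p.Prime := ⟨hp⟩
  have h2 : (2 : ZMod p) ≠ 0 := by
    intro h2
    exact hp2 ((Nat.prime_dvd_prime_iff_eq hp Nat.prime_two).1
      ((ZMod.natCast_eq_zero_iff 2 p).1 (by exact_mod_cast h2)))
  have hsum' : (i + j : ZMod p) = k + l := by exact_mod_cast congrArg (Nat.cast : ℕ → ZMod p) hsum
  have hsq' : (i ^ 2 + j ^ 2 : ZMod p) = k ^ 2 + l ^ 2 := by
    simpa [ZMod.natCast_mod] using congrArg (Nat.cast : ℕ → ZMod p) hsq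
  simp only [← ZMod.natCast_eq_natCast_iff_of_lt hi hk, ← ZMod.natCast_eq_natCast_iff_of_lt hj hl,
    ← ZMod.natCast_eq_natCast_iff_of_lt hi hl, ← ZMod.natCast_eq_natCast_iff_of_lt hj hk]
  exact eq_and_eq_or_of_add_eq_add_of_sq_add_sq h2 hsum' hsq'

/-- No wrap-around: sums of two values stay below `4 p² < 5 p²`. -/
lemma erdosTuran_cast_add_eq_add (hp : p.Prime) (hp2 : p ≠ 2) {i j k l : ℕ} (hi : i < p)
    (hj : j < p) (hk : k < p) (hl : l < p)
    (h : (erdosTuran p i + erdosTuran p j : ZMod (5 * p ^ 2)) = erdosTuran p k + erdosTuran p l) :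
    i = k ∧ j = l ∨ i = l ∧ j = k := by
  have hlt : ∀ {x y}, x < p → y < p → erdosTuran p x + erdosTuran p y < 5 * p ^ 2 :=
    fun hx hy => by
      have := erdosTuran_lt hp.pos hx
      have := erdosTuran_lt hp.pos hy
      omega
  refine erdosTuran_add_eq_add hp hp2 hi hj hk hl ?_
  exact (ZMod.natCast_eq_natCast_iff_of_lt (hlt hi hj) (hlt hk hl)).1 (by exact_mod_cast h)

def erdosTuranSet (p : ℕ) : Finset (ZMod (5 * p ^ 2)) :=
  (range p).image fun i => (erdosTuran p i : ZMod (5 * p ^ 2))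

lemma zero_mem_erdosTuranSet (hp : 0 < p) : 0 ∈ erdosTuranSet p :=
  mem_image.2 ⟨0, mem_range.2 hp, by simp [erdosTuran_zero]⟩

lemma isSidon_erdosTuranSet (hp : p.Prime) (hp2 : p ≠ 2) : IsSidon (erdosTuranSet p) := by
  simp only [IsSidon, erdosTuranSet, forall_mem_image, mem_range]
  intro i hi j hj k hk l hl h
  rcases erdosTuran_cast_add_eq_add hp hp2 hi hj hk hl h with ⟨rfl, rfl⟩ | ⟨rfl, rfl⟩
  · exact .inl ⟨rfl, rfl⟩
  · exact .inr ⟨rfl, rfl⟩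

lemma card_erdosTuranSet (hp : p.Prime) (hp2 : p ≠ 2) : #(erdosTuranSet p) = p := by
  refine (card_image_of_injOn fun i hi j hj h => ?_).trans (card_range p)
  have h' := congrArg (· + (erdosTuran p 0 : ZMod (5 * p ^ 2))) h
  rcases erdosTuran_cast_add_eq_add hp hp2 (mem_range.1 hi) hp.pos (mem_range.1 hj) hp.pos h'
    with ⟨h, -⟩ | ⟨rfl, rfl⟩
  · exact h
  · rfl

lemma closure_erdosTuranSet (hp : 4 < p) :
    AddSubgroup.closure (erdosTuranSet p : Set (ZMod (5 * p ^ 2))) = ⊤ := by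
  have : NeZero (5 * p ^ 2) := ⟨by positivity⟩
  have hmem : ∀ i < p, (erdosTuran p i : ZMod (5 * p ^ 2)) ∈
      AddSubgroup.closure (erdosTuranSet p : Set (ZMod (5 * p ^ 2))) := fun i hi =>
    AddSubgroup.subset_closure (mem_image.2 ⟨i, mem_range.2 hi, rfl⟩)
  have h1 : erdosTuran p 1 = 2 * p + 1 := by
    unfold erdosTuran; rw [Nat.mod_eq_of_lt (by omega : 1 ^ 2 < p)]; ring
  have h2 : erdosTuran p 2 = 4 * p + 4 := by
    unfold erdosTuran; rw [Nat.mod_eq_of_lt (by omega : 2 ^ 2 < p)]; ring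
  have hone : (1 : ZMod (5 * p ^ 2)) = (2 * p + 1) • (erdosTuran p 1 : ZMod (5 * p ^ 2)) -
      p • (erdosTuran p 2 : ZMod (5 * p ^ 2)) := by
    rw [h1, h2]; push_cast [nsmul_eq_mul]; ring
  have hone_mem : (1 : ZMod (5 * p ^ 2)) ∈ AddSubgroup.closure (erdosTuranSet p : Set _) := by
    rw [hone]
    exact sub_mem (nsmul_mem (hmem 1 (by omega)) _) (nsmul_mem (hmem 2 (by omega)) _)
  refine eq_top_iff.2 fun x _ => ?_
  simpa using nsmul_mem hone_mem x.val

end ErdosTuran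

/-- For every `N` there are `n ≥ N` and a strongly connected oriented graph on
`n` vertices with cop number at least `√n / 5`. -/
theorem stmt_7 (N : ℕ) :
    ∃ n : ℕ, N ≤ n ∧
      ∃ (V : Type) (_ : Fintype V) (A : V → V → Prop),
        Fintype.card V = n ∧ IsOriented A ∧ StronglyConnected A ∧
        Real.sqrt n / 5 ≤ (copNumber A : ℝ) := by
  obtain ⟨p, hpN5, hp⟩ := Nat.exists_infinite_primes (max N 5)
  have hp5 : 5 ≤ p := le_of_max_le_right hpN5
  have hp2 : p ≠ 2 := by omega
  have : NeZero (5 * p ^ 2) := ⟨by positivity⟩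
  have hS := isSidon_erdosTuranSet hp hp2
  have h0 := zero_mem_erdosTuranSet hp.pos
  refine ⟨5 * p ^ 2, by nlinarith [le_of_max_le_left hpN5], ZMod (5 * p ^ 2), inferInstance,
    cayleyArc (erdosTuranSet p), ZMod.card _, hS.isOriented_cayleyArc h0,
    stronglyConnected_cayleyArc (closure_erdosTuranSet (by omega)), ?_⟩
  have hcop : (p : ℝ) ≤ copNumber (cayleyArc (erdosTuranSet p)) := by
    exact_mod_cast card_erdosTuranSet hp hp2 ▸ hS.card_le_copNumber h0
  have hsqrt : Real.sqrt ((5 * p ^ 2 : ℕ) : ℝ) ≤ 5 * p :=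
    Real.sqrt_le_iff.2 ⟨by positivity, by push_cast; nlinarith⟩
  linarith

end CopsRobbers
end

section
/- If a finite oriented graph D contains exactly one source (vertex of in-degree 0) and no directed cycles, then the cop number of D equals 1. -/
open Classical

universe u

namespace CopsRobbers

variable {V : Type u}

/-!
One cop starting at the unique source `s` wins. Since the digraph is finite and acyclic, every
vertex is reachable from a source, hence from `s`. The cop keeps the invariant that the robber is
reachable from her, stepping each round onto the first arc of a path towards the robber; the
robber can only move further down, so the invariant survives, while the set of vertices reachable
from the cop strictly shrinks because of acyclicity.
-/

section Reachability

variable {A : V → V → Prop}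

lemma wellFounded_of_acyclic [Finite V] (hacyclic : ∀ v : V, ¬ Relation.TransGen A v v) :
    WellFounded A :=
  haveI : Std.Irrefl (Relation.TransGen A) := ⟨hacyclic⟩
  Subrelation.wf Relation.TransGen.single (Finite.wellFounded_of_trans_of_irrefl _)

lemma exists_source_reflTransGen [Finite V] (hacyclic : ∀ v : V, ¬ Relation.TransGen A v v)
    (v : V) : ∃ s, (∀ u, ¬ A u s) ∧ Relation.ReflTransGen A s v := by
  induction v using (wellFounded_of_acyclic hacyclic).induction with
  | _ v ih =>
    by_cases hv : ∃ u, A u v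
    · obtain ⟨u, huv⟩ := hv
      obtain ⟨s, hs, hsu⟩ := ih u huv
      exact ⟨s, hs, hsu.tail huv⟩
    · exact ⟨v, not_exists.mp hv, .refl⟩

lemma reflTransGen_of_unique_source [Finite V]
    (hacyclic : ∀ v : V, ¬ Relation.TransGen A v v) {s : V}
    (hsource : ∀ u, (∀ w, ¬ A w u) → u = s) (v : V) : Relation.ReflTransGen A s v := by
  obtain ⟨s', hs', hs'v⟩ := exists_source_reflTransGen hacyclic v
  exact hsource s' hs' ▸ hs'v

noncomputable def descendants [Fintype V] (A : V → V → Prop) (c : V) : Finset V :=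
  Finset.univ.filter (Relation.ReflTransGen A c)

lemma self_mem_descendants [Fintype V] (c : V) : c ∈ descendants A c := by
  simpa [descendants] using Relation.ReflTransGen.refl

lemma card_descendants_lt [Fintype V] (hacyclic : ∀ v : V, ¬ Relation.TransGen A v v)
    {c w : V} (hcw : A c w) : (descendants A w).card < (descendants A c).card := by
  refine Finset.card_lt_card ((Finset.ssubset_iff_of_subset ?_).2 ⟨c, ?_, ?_⟩)
  · intro v hv
    simp only [descendants, Finset.mem_filter, Finset.mem_univ, true_and] at hv ⊢
    exact .head hcw hv
  · exact self_mem_descendants c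
  · simp only [descendants, Finset.mem_filter, Finset.mem_univ, true_and]
    exact fun hwc => hacyclic c (.head' hcw hwc)

end Reachability

section Game

variable {A : V → V → Prop}

lemma not_catchIn_zero {t : ℕ} {c : Fin 0 → V} {r : V} : ¬ CatchIn A 0 t c r := by
  intro h
  induction h with
  | caught h => exact h.choose.elim0
  | stepCatch _ _ h => exact h.choose.elim0
  | step _ _ _ ih => exact ih _ (Or.inl rfl)

lemma not_copsWin_zero [Nonempty V] : ¬ CopsWin A 0 := by
  rintro ⟨t, c, hc⟩
  exact not_catchIn_zero (hc (Classical.arbitrary V))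

lemma copNumber_eq_one [Nonempty V] (hwin : CopsWin A 1) : copNumber A = 1 := by
  refine le_antisymm (Nat.sInf_le hwin) (Nat.one_le_iff_ne_zero.mpr fun h0 => ?_)
  have hmem : CopsWin A (copNumber A) := Nat.sInf_mem (s := {k | CopsWin A k}) ⟨1, hwin⟩
  exact not_copsWin_zero (h0 ▸ hmem)

lemma catchIn_one_of_reflTransGen [Fintype V] (hacyclic : ∀ v : V, ¬ Relation.TransGen A v v)
    {t : ℕ} {c r : V} (hcr : Relation.ReflTransGen A c r) (ht : (descendants A c).card ≤ t) :
    CatchIn A 1 t (fun _ => c) r := by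
  induction t generalizing c r with
  | zero =>
    have := Finset.card_pos.mpr ⟨c, self_mem_descendants (A := A) c⟩
    omega
  | succ t ih =>
    rcases hcr.cases_head with rfl | ⟨w, hcw, hwr⟩
    · exact .caught ⟨0, rfl⟩
    · refine .step (fun _ => w) (fun _ => .inr hcw) fun r' hr' => ih ?_ ?_
      · rcases hr' with rfl | hrr'
        exacts [hwr, hwr.tail hrr']
      · have := card_descendants_lt hacyclic hcw
        omega

lemma copsWin_one_of_reflTransGen [Fintype V] (hacyclic : ∀ v : V, ¬ Relation.TransGen A v v)
    {s : V} (hroot : ∀ v, Relation.ReflTransGen A s v) : CopsWin A 1 :=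
  ⟨_, fun _ => s, fun r => catchIn_one_of_reflTransGen hacyclic (hroot r) le_rfl⟩

end Game

theorem stmt_19_general {V : Type u} [Fintype V] (A : V → V → Prop)
    (hsource : ∃! s : V, ∀ u : V, ¬ A u s)
    (hacyclic : ∀ v : V, ¬ Relation.TransGen A v v) :
    copNumber A = 1 := by
  obtain ⟨s, -, hs⟩ := hsource
  have : Nonempty V := ⟨s⟩
  exact copNumber_eq_one <| copsWin_one_of_reflTransGen hacyclic <|
    reflTransGen_of_unique_source hacyclic hs

/-- A finite oriented graph with exactly one source and no directed cycles has
cop number `1`. -/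
theorem stmt_19 {V : Type u} [Fintype V] (A : V → V → Prop)
    (hA : IsOriented A) (hsource : ∃! s : V, ∀ u : V, ¬ A u s)
    (hacyclic : ∀ v : V, ¬ Relation.TransGen A v v) :
    copNumber A = 1 :=
  stmt_19_general A hsource hacyclic

end CopsRobbers
end
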